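/- arXiv:1911.05936 — 4 statements merged into one kernel-verified Lean document; each statement's English description precedes it below -/
import Mathlib

section
/- Let m and n be integers with m < n ≤ 2m-2. Define an m×n array A on symbols {0,…,m-1} by A(i,j) = i mod m if j ≤ m-2, and A(i,j) = (i+1) mod m if j ≥ m-1. Then A has no transversal; that is, there is no injective function j : {0,…,m-1} → {0,…,n-1} such that the symbols A(i, j(i)) for i = 0,…,m-1 are pairwise distinct. -/
/-!
Read the symbols of a transversal in `ZMod m`: the symbol in row `i` is `i + ε i`, where `ε i`
is `1` if the chosen column lies in the last block of columns `m - 1, …, n - 1` and `0` otherwise.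
Both `i ↦ i` and `i ↦ i + ε i` are bijections onto `ZMod m`, so their sums agree and `∑ ε i`,
the number `t` of rows whose column lies in the last block, is divisible by `m`. But the first
block has only `m - 1` columns, so `t ≥ 1`, and the last block has `n - m + 1 ≤ m - 1` columns,
so `t < m`.
-/

/-- The Drisko-type array: `A m i j = i % m` if `j ≤ m-2`, else `(i+1) % m`. -/
def driskoArray (m n : ℕ) (i : Fin m) (j : Fin n) : ℕ :=
  if (j : ℕ) ≤ m - 2 then (i : ℕ) % m else ((i : ℕ) + 1) % m

open Finset Function

theorem Fintype.sum_eq_zero_of_bijective_of_injective_add {α G : Type*} [Fintype α] [Fintype G]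
    [AddCommGroup G] {f d : α → G} (hf : Bijective f) (hfd : Injective (f + d)) :
    ∑ a, d a = 0 := by
  have hfd' : Bijective (f + d) :=
    (Fintype.bijective_iff_injective_and_card _).2 ⟨hfd, Fintype.card_of_bijective hf⟩
  have h : ∑ a, (f + d) a = ∑ a, f a :=
    (Fintype.sum_bijective _ hfd' _ id fun _ => rfl).trans
      (Fintype.sum_bijective _ hf _ id fun _ => rfl).symm
  simpa [Finset.sum_add_distrib] using h

theorem ZMod.natCast_comp_injective {α : Type*} {m : ℕ} {g : α → ℕ} (hg : Injective g)
    (hlt : ∀ a, g a < m) : Injective fun a => (g a : ZMod m) := fun a b hab => by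
  apply hg
  simpa [ZMod.val_natCast_of_lt (hlt a), ZMod.val_natCast_of_lt (hlt b)] using
    congrArg ZMod.val hab

theorem ZMod.bijective_natCast_finVal (m : ℕ) [NeZero m] :
    Bijective fun i : Fin m => ((i : ℕ) : ZMod m) :=
  (Fintype.bijective_iff_injective_and_card _).2
    ⟨ZMod.natCast_comp_injective Fin.val_injective Fin.isLt, by simp⟩

section ColumnCount

variable {α : Type*} [Fintype α] {n : ℕ} {j : α → Fin n}

theorem card_filter_val_le_le (hj : Injective j) (k : ℕ) :
    #{a | (j a : ℕ) ≤ k} ≤ k + 1 := by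
  simpa using card_le_card_of_injOn (fun a => (j a : ℕ)) (t := range (k + 1))
    (fun a ha => by simp_all) fun a _ b _ hab => hj (Fin.val_injective hab)

theorem card_filter_lt_val_le (hj : Injective j) (k : ℕ) :
    #{a | k < (j a : ℕ)} ≤ n - (k + 1) := by
  simpa using card_le_card_of_injOn (fun a => (j a : ℕ)) (t := Ico (k + 1) n)
    (fun a ha => by simp_all) fun a _ b _ hab => hj (Fin.val_injective hab)

end ColumnCount

theorem driskoArray_lt {m n : ℕ} (hm : 0 < m) (i : Fin m) (j : Fin n) :
    driskoArray m n i j < m := by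
  unfold driskoArray
  split <;> exact Nat.mod_lt _ hm

theorem natCast_driskoArray (m n : ℕ) (i : Fin m) (j : Fin n) :
    (driskoArray m n i j : ZMod m) = (i : ℕ) + if m - 2 < (j : ℕ) then 1 else 0 := by
  unfold driskoArray
  split_ifs <;> first | omega | simp [ZMod.natCast_mod]

theorem stmt_0 (m n : ℕ) (hmn : m < n) (hn : n ≤ 2 * m - 2) :
    ¬ ∃ j : Fin m → Fin n, Function.Injective j ∧
      Function.Injective (fun i : Fin m => driskoArray m n i (j i)) := by
  rintro ⟨j, hj, hsym⟩
  have hm : 0 < m := by omega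
  have : NeZero m := ⟨hm.ne'⟩
  have hsum : ∑ i, (if m - 2 < (j i : ℕ) then 1 else 0 : ZMod m) = 0 := by
    refine Fintype.sum_eq_zero_of_bijective_of_injective_add (ZMod.bijective_natCast_finVal m) ?_
    convert ZMod.natCast_comp_injective hsym fun i => driskoArray_lt hm i (j i) using 2
    simp [natCast_driskoArray]
  have hdvd : m ∣ #{i | m - 2 < (j i : ℕ)} := by
    rwa [Finset.sum_boole, ZMod.natCast_eq_zero_iff] at hsum
  have hsplit := card_filter_add_card_filter_not (s := univ) fun i => (j i : ℕ) ≤ m - 2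
  simp only [not_le, card_univ, Fintype.card_fin] at hsplit
  have hfirst := card_filter_val_le_le hj (m - 2)
  have hlast := card_filter_lt_val_le hj (m - 2)
  have := Nat.le_of_dvd (by omega) hdvd
  omega
end

section
/- Let L be a Latin array of order n and let D be a diagonal of L of weight w containing a fixed cell (r,r). Then L contains a diagonal of weight at least w containing the cell (r,r) in which every symbol appears at most twice. -/
/-- A Latin array: no symbol repeated in any row or any column. -/
def IsLatinArray {n : ℕ} {S : Type*} (L : Fin n → Fin n → S) : Prop :=
  (∀ i, Function.Injective (L i)) ∧ (∀ j, Function.Injective fun i => L i j)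

/-- The weight of the diagonal of `L` given by a permutation `σ`:
the number of distinct symbols among `L i (σ i)`. -/
noncomputable def diagWeight {n : ℕ} {S : Type*} (L : Fin n → Fin n → S)
    (σ : Equiv.Perm (Fin n)) : ℕ :=
  (Set.range fun i => L i (σ i)).ncard

/-!
Among the diagonals through `(r, r)` of weight at least `w`, take one with the fewest cells whose
symbol occurs at least three times on it, and suppose there is one; it lies in a row `i ≠ r`.
Exchanging the columns of rows `i` and `j` replaces the symbols `L i (τ i)` and `L j (τ j)` by
`a = L i (τ j)` and `b = L j (τ i)`. As row `i` and column `τ i` have no repeated symbol, at most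
`#symbols` choices of `j` make `a` an old symbol and at most `#repeated` make `b` a repeated one,
`j = i` being counted in both; a symbol occurring three times forces `#symbols + #repeated < n`,
so some `j ≠ r` makes `a` new and `b` occur at most once. After the exchange `a` and `b` occur at
most twice, so there are fewer such cells, and only `L j (τ j)` can be lost while `a` is gained,
so the weight does not drop.
-/

section Diagonal

open Finset Function Equiv

variable {ι S : Type*} [Fintype ι] [DecidableEq S] (L : ι → ι → S)

def diagSymbols (τ : Perm ι) : Finset S := univ.image fun m => L m (τ m)

def diagCount (τ : Perm ι) (t : S) : ℕ := #{m | L m (τ m) = t}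

def repeatedDiagSymbols (τ : Perm ι) : Finset S := {t ∈ diagSymbols L τ | 2 ≤ diagCount L τ t}

def overfullRows (τ : Perm ι) : Finset ι := {m | 3 ≤ diagCount L τ (L m (τ m))}

variable {L} {τ : Perm ι}

lemma mem_diagSymbols {t : S} : t ∈ diagSymbols L τ ↔ 0 < diagCount L τ t := by
  simp [diagSymbols, diagCount, card_pos, filter_nonempty_iff]

lemma diag_mem_diagSymbols (m : ι) : L m (τ m) ∈ diagSymbols L τ :=
  mem_image_of_mem _ (mem_univ m)

lemma sum_diagCount : ∑ t ∈ diagSymbols L τ, diagCount L τ t = Fintype.card ι :=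
  (card_eq_sum_card_image _ univ).symm

lemma card_diagSymbols_add_card_repeatedDiagSymbols_lt {s : S} (hs : 3 ≤ diagCount L τ s) :
    #(diagSymbols L τ) + #(repeatedDiagSymbols L τ) < Fintype.card ι := by
  have hs_mem : s ∈ diagSymbols L τ := mem_diagSymbols.2 (by omega)
  calc #(diagSymbols L τ) + #(repeatedDiagSymbols L τ)
      = ∑ t ∈ diagSymbols L τ, (1 + if 2 ≤ diagCount L τ t then 1 else 0) := by
        rw [sum_add_distrib, sum_const, smul_eq_mul, mul_one, sum_boole, Nat.cast_id,
          repeatedDiagSymbols]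
    _ < ∑ t ∈ diagSymbols L τ, diagCount L τ t := by
        refine sum_lt_sum (fun t ht => ?_) ⟨s, hs_mem, by split_ifs <;> omega⟩
        have := mem_diagSymbols.1 ht
        split_ifs <;> omega
    _ = Fintype.card ι := sum_diagCount

lemma ncard_setOf_eq_diagCount (τ : Perm ι) (t : S) :
    {m | L m (τ m) = t}.ncard = diagCount L τ t := by
  rw [diagCount, ← Set.ncard_coe_finset, coe_filter]
  simp

lemma diagWeight_eq_card_diagSymbols {n : ℕ} (L : Fin n → Fin n → S) (τ : Perm (Fin n)) :
    diagWeight L τ = #(diagSymbols L τ) := by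
  rw [diagWeight, diagSymbols, ← Set.ncard_coe_finset, coe_image, coe_univ, Set.image_univ]

variable [DecidableEq ι]

lemma exists_swap_partner (hrow : ∀ i, Injective (L i)) (hcol : ∀ j, Injective fun i => L i j)
    {i : ι} (hi : 3 ≤ diagCount L τ (L i (τ i))) (r : ι) :
    ∃ j, j ≠ i ∧ j ≠ r ∧ L i (τ j) ∉ diagSymbols L τ ∧ diagCount L τ (L j (τ i)) ≤ 1 := by
  set B₁ : Finset ι := {j | L i (τ j) ∈ diagSymbols L τ}
  set B₂ : Finset ι := {j | 2 ≤ diagCount L τ (L j (τ i))}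
  have hB₁ : #B₁ ≤ #(diagSymbols L τ) :=
    card_le_card_of_injOn _ (fun j hj => (mem_filter.1 hj).2)
      (fun _ _ _ _ h => τ.injective (hrow i h))
  have hB₂ : #B₂ ≤ #(repeatedDiagSymbols L τ) := by
    refine card_le_card_of_injOn _ (fun j hj => ?_) (fun _ _ _ _ h => hcol (τ i) h)
    have h2 := (mem_filter.1 hj).2
    exact mem_filter.2 ⟨mem_diagSymbols.2 (by omega), h2⟩
  have hi_inter : i ∈ B₁ ∩ B₂ := by
    simp only [B₁, B₂, mem_inter, mem_filter, mem_univ, true_and]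
    exact ⟨diag_mem_diagSymbols i, by omega⟩
  have hunion : #(B₁ ∪ B₂) + 1 ≤ #B₁ + #B₂ := by
    rw [← card_union_add_card_inter]
    exact Nat.add_le_add_left (card_pos.2 ⟨i, hi_inter⟩) _
  have hlt : #(insert r (B₁ ∪ B₂)) < #(univ : Finset ι) := by
    have := card_diagSymbols_add_card_repeatedDiagSymbols_lt hi
    have := card_insert_le r (B₁ ∪ B₂)
    rw [card_univ]
    omega
  obtain ⟨j, -, hj⟩ := exists_mem_notMem_of_card_lt_card hlt
  simp only [mem_insert, mem_union, B₁, B₂, mem_filter, mem_univ, true_and, not_or,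
    not_le] at hj
  obtain ⟨hjr, hja, hjb⟩ := hj
  refine ⟨j, ?_, hjr, hja, by omega⟩
  rintro rfl
  exact hja (diag_mem_diagSymbols j)

section Swap

variable {i j : ι}

lemma diagCount_mul_swap_le {t : S} (ha : t ≠ L i (τ j)) (hb : t ≠ L j (τ i)) :
    diagCount L (τ * swap i j) t ≤ diagCount L τ t := by
  refine card_le_card fun m hm => ?_
  simp only [mem_filter, mem_univ, true_and] at hm ⊢
  rcases eq_or_ne m i with rfl | hmi
  · simp only [Perm.mul_apply, swap_apply_left] at hm; exact absurd hm.symm ha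
  rcases eq_or_ne m j with rfl | hmj
  · simp only [Perm.mul_apply, swap_apply_right] at hm; exact absurd hm.symm hb
  simpa [swap_apply_of_ne_of_ne hmi hmj] using hm

lemma diagCount_mul_swap_left_le_two (ha : L i (τ j) ∉ diagSymbols L τ) :
    diagCount L (τ * swap i j) (L i (τ j)) ≤ 2 := by
  refine (card_le_card fun m hm => ?_).trans (card_le_two (a := i) (b := j))
  simp only [mem_filter, mem_univ, true_and] at hm
  by_contra hmij
  simp only [mem_insert, mem_singleton, not_or] at hmij
  simp only [Perm.mul_apply, swap_apply_of_ne_of_ne hmij.1 hmij.2] at hm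
  exact ha (hm ▸ diag_mem_diagSymbols m)

lemma diagCount_mul_swap_right_le_two (ha : L i (τ j) ∉ diagSymbols L τ)
    (hb : diagCount L τ (L j (τ i)) ≤ 1) :
    diagCount L (τ * swap i j) (L j (τ i)) ≤ 2 := by
  rcases eq_or_ne (L j (τ i)) (L i (τ j)) with hab | hab
  · rw [hab]; exact diagCount_mul_swap_left_le_two ha
  refine (card_le_card fun m hm => ?_).trans
    ((card_insert_le j _).trans (Nat.succ_le_succ hb))
  simp only [mem_filter, mem_univ, true_and, mem_insert] at hm ⊢
  rcases eq_or_ne m j with rfl | hmj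
  · exact Or.inl rfl
  have hmi : m ≠ i := by rintro rfl; simp only [Perm.mul_apply, swap_apply_left] at hm; exact hab hm.symm
  exact Or.inr (by simpa [swap_apply_of_ne_of_ne hmi hmj] using hm)

lemma card_overfullRows_mul_swap_lt (ha : L i (τ j) ∉ diagSymbols L τ)
    (hb : diagCount L τ (L j (τ i)) ≤ 1) (hi : i ∈ overfullRows L τ) :
    #(overfullRows L (τ * swap i j)) < #(overfullRows L τ) := by
  refine (card_le_card fun m hm => ?_).trans_lt (card_erase_lt_of_mem hi)
  simp only [overfullRows, mem_filter, mem_univ, true_and] at hm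
  have hmi : m ≠ i := by
    rintro rfl
    simp only [Perm.mul_apply, swap_apply_left] at hm
    have := diagCount_mul_swap_left_le_two ha
    omega
  have hmj : m ≠ j := by
    rintro rfl
    simp only [Perm.mul_apply, swap_apply_right] at hm
    have := diagCount_mul_swap_right_le_two ha hb
    omega
  simp only [Perm.mul_apply, swap_apply_of_ne_of_ne hmi hmj] at hm
  have hta : L m (τ m) ≠ L i (τ j) := fun h => ha (h ▸ diag_mem_diagSymbols m)
  have htb : L m (τ m) ≠ L j (τ i) := by
    intro h
    have := diagCount_mul_swap_right_le_two ha hb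
    rw [h] at hm
    omega
  have := diagCount_mul_swap_le hta htb
  simp only [mem_erase, overfullRows, mem_filter, mem_univ, true_and]
  exact ⟨hmi, by omega⟩

lemma card_diagSymbols_le_mul_swap (ha : L i (τ j) ∉ diagSymbols L τ)
    (hi : 3 ≤ diagCount L τ (L i (τ i))) :
    #(diagSymbols L τ) ≤ #(diagSymbols L (τ * swap i j)) := by
  have hsub : insert (L i (τ j)) ((diagSymbols L τ).erase (L j (τ j)))
      ⊆ diagSymbols L (τ * swap i j) := by
    intro t ht
    rcases mem_insert.1 ht with rfl | ht
    · simpa using diag_mem_diagSymbols (τ := τ * swap i j) i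
    obtain ⟨hty, ht⟩ := mem_erase.1 ht
    obtain ⟨m, rfl, hmi, hmj⟩ : ∃ m, L m (τ m) = t ∧ m ≠ i ∧ m ≠ j := by
      by_cases hts : t = L i (τ i)
      · have hfib : 1 < #(({m | L m (τ m) = t} : Finset ι).erase i) := by
          rw [card_erase_of_mem (by simp [hts])]
          exact lt_tsub_iff_right.2 (hts ▸ hi)
        obtain ⟨m, hm, hmj⟩ := exists_mem_ne hfib j
        simp only [mem_erase, mem_filter, mem_univ, true_and] at hm
        exact ⟨m, hm.2, hm.1, hmj⟩
      · obtain ⟨m, -, rfl⟩ := mem_image.1 ht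
        exact ⟨m, rfl, by rintro rfl; exact hts rfl, by rintro rfl; exact hty rfl⟩
    simpa [swap_apply_of_ne_of_ne hmi hmj] using diag_mem_diagSymbols (τ := τ * swap i j) m
  calc #(diagSymbols L τ)
      = #(insert (L i (τ j)) ((diagSymbols L τ).erase (L j (τ j)))) := by
        rw [card_insert_of_notMem (fun h => ha (mem_of_mem_erase h)),
          card_erase_add_one (diag_mem_diagSymbols j)]
    _ ≤ #(diagSymbols L (τ * swap i j)) := card_le_card hsub

end Swap

lemma exists_swap_improving (hrow : ∀ i, Injective (L i)) (hcol : ∀ j, Injective fun i => L i j)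
    {r : ι} (hτ : τ r = r) {t : S} (ht : 3 ≤ diagCount L τ t) :
    ∃ τ' : Perm ι, τ' r = r ∧ #(diagSymbols L τ) ≤ #(diagSymbols L τ') ∧
      #(overfullRows L τ') < #(overfullRows L τ) := by
  obtain ⟨i, hit, hir⟩ :=
    exists_mem_ne (s := {m | L m (τ m) = t}) (by unfold diagCount at ht; omega) r
  rw [mem_filter] at hit
  rw [← hit.2] at ht
  obtain ⟨j, -, hjr, ha, hb⟩ := exists_swap_partner hrow hcol ht r
  refine ⟨τ * swap i j, ?_, card_diagSymbols_le_mul_swap ha ht,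
    card_overfullRows_mul_swap_lt ha hb (by simpa [overfullRows] using ht)⟩
  rw [Perm.mul_apply, swap_apply_of_ne_of_ne hir.symm hjr.symm, hτ]

lemma exists_diagCount_le_two (hrow : ∀ i, Injective (L i)) (hcol : ∀ j, Injective fun i => L i j)
    {r : ι} (hτ : τ r = r) :
    ∃ τ' : Perm ι, τ' r = r ∧ #(diagSymbols L τ) ≤ #(diagSymbols L τ') ∧
      ∀ t, diagCount L τ' t ≤ 2 := by
  obtain ⟨τ', hτ', hmin⟩ := exists_min_image
    {τ' : Perm ι | τ' r = r ∧ #(diagSymbols L τ) ≤ #(diagSymbols L τ')}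
    (fun τ' => #(overfullRows L τ')) ⟨τ, by simp [hτ]⟩
  simp only [mem_filter, mem_univ, true_and] at hτ' hmin
  refine ⟨τ', hτ'.1, hτ'.2, fun t => ?_⟩
  by_contra! ht
  obtain ⟨τ'', hr'', hD'', hlt⟩ := exists_swap_improving hrow hcol hτ'.1 ht
  exact (hmin τ'' ⟨hr'', hτ'.2.trans hD''⟩).not_gt hlt

end Diagonal

theorem stmt_4 {n : ℕ} {S : Type*} (L : Fin n → Fin n → S) (hL : IsLatinArray L)
    (σ : Equiv.Perm (Fin n)) (r : Fin n) (hr : σ r = r) (w : ℕ) (hw : diagWeight L σ = w) :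
    ∃ τ : Equiv.Perm (Fin n), τ r = r ∧ w ≤ diagWeight L τ ∧
      ∀ s : S, {i : Fin n | L i (τ i) = s}.ncard ≤ 2 := by
  classical
  obtain ⟨τ, hτr, hweight, hcount⟩ := exists_diagCount_le_two hL.1 hL.2 hr
  refine ⟨τ, hτr, ?_, fun s => ?_⟩
  · rw [← hw, diagWeight_eq_card_diagSymbols, diagWeight_eq_card_diagSymbols]
    exact hweight
  · rw [ncard_setOf_eq_diagCount]
    exact hcount s
end

section
/- Every Latin array of order n contains a partial transversal of length at least ⌈n/2⌉. -/
/-- `L` has a partial transversal of length `k`. -/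
def HasPT {n : ℕ} {S : Type*} (L : Fin n → Fin n → S) (k : ℕ) : Prop :=
  ∃ r c : Fin k → Fin n, Function.Injective r ∧ Function.Injective c ∧
    Function.Injective (fun x => L (r x) (c x))

/-!
Take a partial transversal `T` of maximum size `t`. If `t < n`, some row `r` is missed by `T`.
For each of the at least `n - t` columns `c` missed by `T`, the symbol `L r c` already occurs in
`T`, for otherwise the cell `(r, c)` would extend `T`. These symbols are distinct because row `r`
has no repeated symbol, and `T` carries only `t` symbols, so `n - t ≤ t`.
-/

open Finset Function

section PartialTransversal

variable {α β S : Type*}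

def IsPartialTransversal (L : α → β → S) (T : Finset (α × β)) : Prop :=
  Set.InjOn Prod.fst (T : Set (α × β)) ∧ Set.InjOn Prod.snd (T : Set (α × β)) ∧
    Set.InjOn (uncurry L) (T : Set (α × β))

theorem isPartialTransversal_empty (L : α → β → S) : IsPartialTransversal L ∅ := by
  simp [IsPartialTransversal]

theorem IsPartialTransversal.insert [DecidableEq α] [DecidableEq β] [DecidableEq S]
    {L : α → β → S} {T : Finset (α × β)} (hT : IsPartialTransversal L T) {r : α} {c : β}
    (hr : r ∉ T.image Prod.fst) (hc : c ∉ T.image Prod.snd) (hs : L r c ∉ T.image (uncurry L)) :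
    IsPartialTransversal L (insert (r, c) T) := by
  have hrc : (r, c) ∉ (T : Set (α × β)) := fun h => hr (mem_image_of_mem Prod.fst h)
  obtain ⟨h₁, h₂, h₃⟩ := hT
  rw [IsPartialTransversal, coe_insert, Set.injOn_insert hrc, Set.injOn_insert hrc,
    Set.injOn_insert hrc]
  simp_all only [← coe_image, mem_coe, uncurry_apply_pair, not_false_eq_true, and_self]

theorem exists_isPartialTransversal_saturated [Fintype α] [Fintype β] [DecidableEq α]
    [DecidableEq β] [DecidableEq S] (L : α → β → S) :
    ∃ T, IsPartialTransversal L T ∧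
      ∀ r ∉ T.image Prod.fst, ∀ c ∉ T.image Prod.snd, L r c ∈ T.image (uncurry L) := by
  classical
  obtain ⟨T, hT, hmax⟩ := exists_max_image (univ.filter (IsPartialTransversal L)) card
    ⟨∅, mem_filter.2 ⟨mem_univ _, isPartialTransversal_empty L⟩⟩
  have hT : IsPartialTransversal L T := (mem_filter.1 hT).2
  refine ⟨T, hT, fun r hr c hc => ?_⟩
  by_contra hs
  have hle := hmax _ (mem_filter.2 ⟨mem_univ _, hT.insert hr hc hs⟩)
  rw [card_insert_of_notMem fun h => hr (mem_image_of_mem Prod.fst h)] at hle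
  omega

theorem card_le_two_mul_card_of_saturated [Fintype β] [DecidableEq β] [DecidableEq S]
    {L : α → β → S} {T : Finset (α × β)} {r : α} (hrow : Injective (L r))
    (hsat : ∀ c ∉ T.image Prod.snd, L r c ∈ T.image (uncurry L)) :
    Fintype.card β ≤ 2 * #T := by
  have hmissed : #(T.image Prod.snd)ᶜ ≤ #T :=
    (card_le_card_of_injOn (L r) (fun c hc => hsat c (mem_compl.1 hc)) hrow.injOn).trans
      card_image_le
  have hused : #(T.image Prod.snd) ≤ #T := card_image_le
  rw [card_compl] at hmissed
  omega

end PartialTransversal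

theorem HasPT.mono {n : ℕ} {S : Type*} {L : Fin n → Fin n → S} {j k : ℕ} (h : HasPT L k)
    (hjk : j ≤ k) : HasPT L j := by
  obtain ⟨r, c, hr, hc, hs⟩ := h
  exact ⟨r ∘ Fin.castLE hjk, c ∘ Fin.castLE hjk, hr.comp (Fin.castLE_injective hjk),
    hc.comp (Fin.castLE_injective hjk), hs.comp (Fin.castLE_injective hjk)⟩

theorem IsPartialTransversal.hasPT {n : ℕ} {S : Type*} {L : Fin n → Fin n → S}
    {T : Finset (Fin n × Fin n)} (hT : IsPartialTransversal L T) : HasPT L #T := by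
  obtain ⟨h₁, h₂, h₃⟩ := hT
  let e := T.equivFin.symm
  refine ⟨fun x => (e x).1.1, fun x => (e x).1.2, ?_, ?_, ?_⟩ <;> intro x y h
  · exact e.injective (Subtype.ext (h₁ (e x).2 (e y).2 h))
  · exact e.injective (Subtype.ext (h₂ (e x).2 (e y).2 h))
  · exact e.injective (Subtype.ext (h₃ (e x).2 (e y).2 h))

theorem stmt_7 {n : ℕ} {S : Type*} (L : Fin n → Fin n → S) (hL : IsLatinArray L) :
    HasPT L ((n + 1) / 2) := by
  classical
  obtain ⟨T, hT, hsat⟩ := exists_isPartialTransversal_saturated L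
  refine hT.hasPT.mono ?_
  suffices n ≤ 2 * #T by omega
  by_cases hfull : n ≤ #T
  · omega
  have hrows : #(T.image Prod.fst) < #(univ : Finset (Fin n)) := by
    rw [card_univ, Fintype.card_fin]
    exact card_image_le.trans_lt (not_le.1 hfull)
  obtain ⟨r, -, hr⟩ := exists_mem_notMem_of_card_lt_card hrows
  simpa using card_le_two_mul_card_of_saturated (hL.1 r) (hsat r hr)
end

section
/- Let E be an n×n array that has no partial transversal of length n-1 (i.e., no n-1 cells in distinct rows and columns with distinct symbols). Form an (n+1)×(n+1) array A by adding one new row and one new column to E, filled with 2n+1 symbols that are pairwise distinct and do not appear in E. Then A has no transversal. -/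
/-!
A transversal of the enlarged array `A` meets the new row and the new column in at most two
cells, so the cells it keeps inside `E` form a partial transversal of `E` of length at least
`n - 1`.
-/

open Function

section

variable {α β α' β' ι S : Type*}

def HasPartialTransversal (E : α → β → S) (ℓ : ℕ) : Prop :=
  ∃ r : Fin ℓ → α, ∃ c : Fin ℓ → β, Injective r ∧ Injective c ∧ Injective fun x => E (r x) (c x)

theorem HasPartialTransversal.of_le_card [Fintype ι] {E : α → β → S} {ℓ : ℕ}
    (r : ι → α) (c : ι → β) (hr : Injective r) (hc : Injective c)
    (hE : Injective fun x => E (r x) (c x)) (hℓ : ℓ ≤ Fintype.card ι) :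
    HasPartialTransversal E ℓ := by
  obtain ⟨f⟩ : Nonempty (Fin ℓ ↪ ι) := by
    rwa [Function.Embedding.nonempty_iff_card_le, Fintype.card_fin]
  exact ⟨r ∘ f, c ∘ f, hr.comp f.injective, hc.comp f.injective, hE.comp f.injective⟩

theorem card_sub_le_card_subtype_mem_range [Fintype α] [Fintype β] [Fintype α'] [Fintype β']
    (σ : α ≃ β) {g : α' → α} {h : β' → β} (hg : Injective g) (hh : Injective h)
    [DecidablePred fun i => σ (g i) ∈ Set.range h] :
    Fintype.card α' + Fintype.card β' - Fintype.card α ≤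
      Fintype.card {i // σ (g i) ∈ Set.range h} := by
  classical
  have hlost : Fintype.card {i // σ (g i) ∉ Set.range h} ≤ Fintype.card α - Fintype.card β' := by
    calc Fintype.card {i // σ (g i) ∉ Set.range h}
        ≤ Fintype.card {b // b ∉ Set.range h} :=
          Fintype.card_le_of_injective (fun i => ⟨σ (g i.1), i.2⟩)
            fun i j hij => Subtype.ext (hg (σ.injective (congrArg Subtype.val hij)))
      _ = Fintype.card α - Fintype.card β' := by
          rw [Fintype.card_subtype_compl, Set.card_range_of_injective hh, Fintype.card_congr σ]
  have hsplit := Fintype.card_subtype_compl (fun i => σ (g i) ∈ Set.range h)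
  have hβ' : Fintype.card β' ≤ Fintype.card α :=
    Fintype.card_congr σ ▸ Fintype.card_le_of_injective h hh
  have hα' : Fintype.card {i // σ (g i) ∈ Set.range h} ≤ Fintype.card α' :=
    Fintype.card_subtype_le _
  omega

/-- The length counts the rows of `α'` whose cell in the transversal survives: at most
`card β - card β'` of them have it in a column outside `h`. -/
theorem hasPartialTransversal_restrict_of_transversal [Fintype α] [Fintype β] [Fintype α']
    [Fintype β'] {A : α → β → S} (σ : α ≃ β) (hσ : Injective fun i => A i (σ i))
    {g : α' → α} {h : β' → β} (hg : Injective g) (hh : Injective h) :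
    HasPartialTransversal (fun i j => A (g i) (h j))
      (Fintype.card α' + Fintype.card β' - Fintype.card α) := by
  classical
  let col (i : {i // σ (g i) ∈ Set.range h}) : β' := (Equiv.ofInjective h hh).symm ⟨_, i.2⟩
  have h_col (i) : h (col i) = σ (g i.1) := Equiv.apply_ofInjective_symm hh _
  refine .of_le_card Subtype.val col Subtype.val_injective ?_ ?_
    (card_sub_le_card_subtype_mem_range σ hg hh)
  · intro i j hij
    exact Subtype.ext (hg (σ.injective (by rw [← h_col, ← h_col, hij])))
  · intro i j hij
    simp only [h_col] at hij
    exact Subtype.ext (hg (hσ hij))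

end

theorem stmt_9_general {n : ℕ} {S : Type*} (E : Fin n → Fin n → S)
    (hE : ¬ ∃ r c : Fin (n - 1) → Fin n, Function.Injective r ∧ Function.Injective c ∧
      Function.Injective (fun x => E (r x) (c x)))
    (A : Fin (n + 1) → Fin (n + 1) → S)
    (hrestrict : ∀ i j : Fin n, A i.castSucc j.castSucc = E i j) :
    ¬ ∃ σ : Equiv.Perm (Fin (n + 1)), Function.Injective (fun i => A i (σ i)) := by
  rintro ⟨σ, hσ⟩
  have hsub : (fun i j : Fin n => A i.castSucc j.castSucc) = E := funext₂ hrestrict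
  have h := hasPartialTransversal_restrict_of_transversal σ hσ
    (Fin.castSucc_injective n) (Fin.castSucc_injective n)
  rw [hsub, Fintype.card_fin, Fintype.card_fin, show n + n - (n + 1) = n - 1 by omega] at h
  exact hE h

theorem stmt_9 {n : ℕ} (hn : 1 ≤ n) {S : Type*} (E : Fin n → Fin n → S)
    (hE : ¬ ∃ r c : Fin (n - 1) → Fin n, Function.Injective r ∧ Function.Injective c ∧
      Function.Injective (fun x => E (r x) (c x)))
    (A : Fin (n + 1) → Fin (n + 1) → S)
    (hrestrict : ∀ i j : Fin n, A i.castSucc j.castSucc = E i j)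
    (hfresh : ∀ p q : Fin (n + 1) × Fin (n + 1),
      (p.1 = Fin.last n ∨ p.2 = Fin.last n) → (q.1 = Fin.last n ∨ q.2 = Fin.last n) →
      A p.1 p.2 = A q.1 q.2 → p = q)
    (hnew : ∀ p : Fin (n + 1) × Fin (n + 1), (p.1 = Fin.last n ∨ p.2 = Fin.last n) →
      ∀ i j : Fin n, A p.1 p.2 ≠ E i j) :
    ¬ ∃ σ : Equiv.Perm (Fin (n + 1)), Function.Injective (fun i => A i (σ i)) :=
  stmt_9_general E hE A hrestrict
end
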